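/- Let K ⊆ ℝⁿ be closed, φ a strictly convex norm, x ∉ K, a ∈ ξ_K^φ(x), and 0 < t ≤ ρ_K^φ(x) with ρ_K^φ(x) < ∞. Then ρ_K^φ(x) = t · ρ_K^φ(a + t (x − a)). -/

import Mathlib

open Set Filter Metric MeasureTheory Topology ENNReal

noncomputable section

abbrev Euc (n : ℕ) := EuclideanSpace ℝ (Fin n)

def IsNorm {n : ℕ} (φ : Euc n → ℝ) : Prop :=
  (∀ x, φ x = 0 ↔ x = 0) ∧ (∀ (c : ℝ) (x : Euc n), φ (c • x) = |c| * φ x) ∧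
    (∀ x y, φ (x + y) ≤ φ x + φ y)

def StrictlyConvexNorm {n : ℕ} (φ : Euc n → ℝ) : Prop :=
  IsNorm φ ∧ ∀ a b, φ (a + b) = φ a + φ b → φ b • a = φ a • b

def UniformlyConvexNorm {n : ℕ} (φ : Euc n → ℝ) : Prop :=
  IsNorm φ ∧ ∃ γ : ℝ, 0 < γ ∧ ConvexOn ℝ Set.univ (fun x => φ x - γ * ‖x‖)

def distφ {n : ℕ} (φ : Euc n → ℝ) (K : Set (Euc n)) (x : Euc n) : ℝ :=
  sInf {r | ∃ y ∈ K, r = φ (x - y)}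

def nearφ {n : ℕ} (φ : Euc n → ℝ) (K : Set (Euc n)) (x : Euc n) : Set (Euc n) :=
  {a ∈ K | φ (x - a) = distφ φ K x}

def rhoφ {n : ℕ} (φ : Euc n → ℝ) (K : Set (Euc n)) (x : Euc n) : ℝ≥0∞ :=
  sSup {r : ℝ≥0∞ | ∃ s : ℝ, ∃ a ∈ nearφ φ K x,
    r = ENNReal.ofReal s ∧ distφ φ K (a + s • (x - a)) = s * distφ φ K x}

def normalBundle {n : ℕ} (φ : Euc n → ℝ) (K : Set (Euc n)) : Set (Euc n × Euc n) :=
  {p | p.1 ∈ K ∧ φ p.2 = 1 ∧ ∃ s : ℝ, 0 < s ∧ distφ φ K (p.1 + s • p.2) = s}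

def reachφ {n : ℕ} (φ : Euc n → ℝ) (K : Set (Euc n)) (p : Euc n × Euc n) : ℝ≥0∞ :=
  sSup {r : ℝ≥0∞ | ∃ s : ℝ, 0 < s ∧ r = ENNReal.ofReal s ∧ distφ φ K (p.1 + s • p.2) = s}

def cutLocus {n : ℕ} (φ : Euc n → ℝ) (K : Set (Euc n)) : Set (Euc n) :=
  {x | ∃ p ∈ normalBundle φ K, reachφ φ K p ≠ ⊤ ∧
    x = p.1 + (reachφ φ K p).toReal • p.2}

def PtTwiceDiffAt {n : ℕ} (f : Euc n → ℝ) (x : Euc n) : Prop :=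
  ∃ (L : Euc n →L[ℝ] ℝ) (Q : Euc n →L[ℝ] Euc n →L[ℝ] ℝ),
    Tendsto (fun y => |f y - f x - L (y - x) - Q (y - x) (y - x)| / ‖y - x‖ ^ 2)
      (𝓝[≠] x) (𝓝 0)

/-! Write `δ` for `distφ φ K` and `d = δ(x)`. The set `S(a, x) = raySet φ K a x` of `s ≥ 0` with
`δ(a + s • (x - a)) = s * d` is an interval containing `[0, 1]`, and by strict convexity a
parameter `s > 1` can only occur for the unique nearest point, so `ρ(x) = sup S(a, x)` for every
`a ∈ ξ(x)`. Since `δ` is Lipschitz along the ray, `S(a, x)` is closed at its supremum, so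
`t ∈ S(a, x)`; then `a` is a nearest point of `x_t = a + t • (x - a)`, `δ(x_t) = t * d`, and the
ray from `a` through `x_t` is the same ray reparametrized: `S(a, x) = t • S(a, x_t)`. -/

namespace IsNorm

variable {n : ℕ} {φ : Euc n → ℝ}

lemma nonneg (h : IsNorm φ) (v : Euc n) : 0 ≤ φ v := by
  have h0 : φ (0 : Euc n) = 0 := (h.1 0).2 rfl
  have hneg : φ (-v) = φ v := by simpa using h.2.1 (-1) v
  have htri := h.2.2 v (-v)
  rw [add_neg_cancel, h0, hneg] at htri
  linarith

lemma map_smul_of_nonneg (h : IsNorm φ) {c : ℝ} (hc : 0 ≤ c) (v : Euc n) :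
    φ (c • v) = c * φ v := by
  rw [h.2.1, abs_of_nonneg hc]

end IsNorm

section distφ

variable {n : ℕ} {φ : Euc n → ℝ} {K : Set (Euc n)}

lemma distφ_le_of_mem (h : IsNorm φ) {y : Euc n} (hy : y ∈ K) (x : Euc n) :
    distφ φ K x ≤ φ (x - y) :=
  csInf_le ⟨0, fun _ ⟨_, _, hz⟩ => hz ▸ h.nonneg _⟩ ⟨y, hy, rfl⟩

lemma distφ_nonneg (h : IsNorm φ) (x : Euc n) : 0 ≤ distφ φ K x :=
  Real.sInf_nonneg fun _ ⟨_, _, hz⟩ => hz ▸ h.nonneg _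

lemma distφ_le_add (h : IsNorm φ) (hK : K.Nonempty) (y z : Euc n) :
    distφ φ K y ≤ φ (y - z) + distφ φ K z := by
  rw [← sub_le_iff_le_add']
  obtain ⟨w₀, hw₀⟩ := hK
  refine le_csInf ⟨φ (z - w₀), w₀, hw₀, rfl⟩ ?_
  rintro r ⟨w, hw, rfl⟩
  rw [sub_le_iff_le_add']
  calc distφ φ K y ≤ φ (y - w) := distφ_le_of_mem h hw y
    _ = φ ((y - z) + (z - w)) := by rw [sub_add_sub_cancel]
    _ ≤ φ (y - z) + φ (z - w) := h.2.2 _ _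

lemma distφ_pos_of_mem_nearφ (h : IsNorm φ) {x a : Euc n} (hx : x ∉ K)
    (ha : a ∈ nearφ φ K x) : 0 < distφ φ K x := by
  refine (distφ_nonneg h x).lt_of_ne fun hd => hx ?_
  have hxa : x - a = 0 := (h.1 _).1 (ha.2.trans hd.symm)
  exact sub_eq_zero.1 hxa ▸ ha.1

end distφ

def raySet {n : ℕ} (φ : Euc n → ℝ) (K : Set (Euc n)) (a x : Euc n) : Set ℝ :=
  {s | 0 ≤ s ∧ distφ φ K (a + s • (x - a)) = s * distφ φ K x}

section raySet

variable {n : ℕ} {φ : Euc n → ℝ} {K : Set (Euc n)} {a x : Euc n}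

lemma distφ_ray_le (h : IsNorm φ) (ha : a ∈ nearφ φ K x) {s : ℝ} (hs : 0 ≤ s) :
    distφ φ K (a + s • (x - a)) ≤ s * distφ φ K x := by
  have := distφ_le_of_mem h ha.1 (a + s • (x - a))
  rwa [add_sub_cancel_left, h.map_smul_of_nonneg hs, ha.2] at this

lemma distφ_ray_le_add (h : IsNorm φ) (ha : a ∈ nearφ φ K x) (s s' : ℝ) :
    distφ φ K (a + s • (x - a)) ≤ |s - s'| * distφ φ K x + distφ φ K (a + s' • (x - a)) := by
  have hv : (a + s • (x - a)) - (a + s' • (x - a)) = (s - s') • (x - a) := by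
    rw [sub_smul]; abel
  have := distφ_le_add h ⟨a, ha.1⟩ (a + s • (x - a)) (a + s' • (x - a))
  rwa [hv, h.2.1, ha.2] at this

lemma mem_raySet_of_le (h : IsNorm φ) (ha : a ∈ nearφ φ K x) {s s' : ℝ}
    (hs : s ∈ raySet φ K a x) (hs' : 0 ≤ s') (hss : s' ≤ s) : s' ∈ raySet φ K a x := by
  refine ⟨hs', le_antisymm (distφ_ray_le h ha hs') ?_⟩
  have := distφ_ray_le_add h ha s s'
  rw [hs.2, abs_of_nonneg (sub_nonneg.2 hss)] at this
  linarith

lemma one_mem_raySet : (1 : ℝ) ∈ raySet φ K a x :=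
  ⟨zero_le_one, by simp⟩

lemma mem_raySet_of_forall_lt (h : IsNorm φ) (ha : a ∈ nearφ φ K x) {t : ℝ} (ht : 0 < t)
    (hS : Ico 0 t ⊆ raySet φ K a x) : t ∈ raySet φ K a x := by
  set f := distφ φ K (a + t • (x - a))
  set d := distφ φ K x
  -- `s ↦ δ(a + s • (x - a))` is `d`-Lipschitz, which turns the identity on `[0, t)` into a
  -- closed condition that passes to the endpoint `t`
  have hclosed : IsClosed {s : ℝ | s * d ≤ (t - s) * d + f} :=
    isClosed_le (by fun_prop) (by fun_prop)
  have hIco : Ico 0 t ⊆ {s : ℝ | s * d ≤ (t - s) * d + f} := fun s hs => by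
    have := distφ_ray_le_add h ha s t
    rwa [(hS hs).2, abs_sub_comm, abs_of_pos (sub_pos.2 hs.2)] at this
  have hmem := hclosed.closure_subset_iff.2 hIco
    (by rw [closure_Ico ht.ne]; exact right_mem_Icc.2 ht.le)
  refine ⟨ht.le, le_antisymm (distφ_ray_le h ha ht.le) ?_⟩
  simpa using hmem

lemma eq_of_mem_nearφ_of_one_lt (hφ : StrictlyConvexNorm φ) (hd : 0 < distφ φ K x)
    (ha : a ∈ nearφ φ K x) {b : Euc n} (hb : b ∈ nearφ φ K x) {s : ℝ} (hs1 : 1 < s)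
    (hs : s ∈ raySet φ K a x) : b = a := by
  have h := hφ.1
  set d := distφ φ K x
  set z := a + s • (x - a) with hz
  have hzx : z - x = (s - 1) • (x - a) := by
    rw [hz, sub_smul, one_smul]; abel
  have hφzx : φ (z - x) = (s - 1) * d := by
    rw [hzx, h.map_smul_of_nonneg (by linarith), ha.2]
  have hφzb : φ (z - b) = s * d := by
    refine le_antisymm ?_ (hs.2 ▸ distφ_le_of_mem h hb.1 z)
    calc φ (z - b) = φ ((z - x) + (x - b)) := by rw [sub_add_sub_cancel]
      _ ≤ φ (z - x) + φ (x - b) := h.2.2 _ _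
      _ = s * d := by rw [hφzx, hb.2]; ring
  have heq : φ ((z - x) + (x - b)) = φ (z - x) + φ (x - b) := by
    rw [sub_add_sub_cancel, hφzb, hφzx, hb.2]; ring
  -- equality in the triangle inequality makes `x - b` parallel to `z - x`, hence to `x - a`
  have hsc := hφ.2 (z - x) (x - b) heq
  rw [hφzx, hb.2, hzx, smul_smul, mul_comm] at hsc
  have hne : (s - 1) * d ≠ 0 := mul_ne_zero (by linarith) hd.ne'
  exact (sub_right_injective (smul_right_injective (Euc n) hne hsc)).symm

lemma rhoφ_eq_iSup_raySet (hφ : StrictlyConvexNorm φ) (hd : 0 < distφ φ K x)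
    (ha : a ∈ nearφ φ K x) : rhoφ φ K x = ⨆ s ∈ raySet φ K a x, ENNReal.ofReal s := by
  apply le_antisymm
  · refine sSup_le ?_
    rintro _ ⟨s, b, hb, rfl, hbs⟩
    rcases le_or_gt s 1 with hs1 | hs1
    · exact (ENNReal.ofReal_le_ofReal hs1).trans (le_iSup₂_of_le 1 one_mem_raySet le_rfl)
    · have hs : s ∈ raySet φ K b x := ⟨by linarith, hbs⟩
      obtain rfl := eq_of_mem_nearφ_of_one_lt hφ hd hb ha hs1 hs
      exact le_iSup₂_of_le s hs le_rfl
  · exact iSup₂_le fun s hs => le_sSup ⟨s, a, ha, rfl, hs.2⟩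

lemma mem_raySet_of_ofReal_le_rhoφ (hφ : StrictlyConvexNorm φ) (hd : 0 < distφ φ K x)
    (ha : a ∈ nearφ φ K x) {t : ℝ} (ht : 0 < t) (htle : ENNReal.ofReal t ≤ rhoφ φ K x) :
    t ∈ raySet φ K a x := by
  refine mem_raySet_of_forall_lt hφ.1 ha ht fun s hs => ?_
  have hlt : ENNReal.ofReal s < ⨆ s ∈ raySet φ K a x, ENNReal.ofReal s :=
    ((ENNReal.ofReal_lt_ofReal_iff ht).2 hs.2).trans_le (rhoφ_eq_iSup_raySet hφ hd ha ▸ htle)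
  obtain ⟨s', hs', hss'⟩ := lt_biSup_iff.1 hlt
  exact mem_raySet_of_le hφ.1 ha hs' hs.1 ((ENNReal.ofReal_lt_ofReal_iff'.1 hss').1.le)

lemma mem_nearφ_ray (h : IsNorm φ) (ha : a ∈ nearφ φ K x) {t : ℝ}
    (ht : t ∈ raySet φ K a x) : a ∈ nearφ φ K (a + t • (x - a)) := by
  refine ⟨ha.1, ?_⟩
  rw [add_sub_cancel_left, h.map_smul_of_nonneg ht.1, ha.2, ht.2]

lemma raySet_eq_image_mul {t : ℝ} (ht : 0 < t) (htS : t ∈ raySet φ K a x) :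
    raySet φ K a x = (t * ·) '' raySet φ K a (a + t • (x - a)) := by
  have hmem : ∀ u, u ∈ raySet φ K a (a + t • (x - a)) ↔ t * u ∈ raySet φ K a x := by
    intro u
    simp only [raySet, mem_ofPred_eq, add_sub_cancel_left, smul_smul, htS.2,
      mul_nonneg_iff_of_pos_left ht, mul_comm u t]
    rw [mul_left_comm u t, ← mul_assoc]
  ext s
  refine ⟨fun hs => ⟨s / t, (hmem _).2 ?_, mul_div_cancel₀ s ht.ne'⟩, ?_⟩
  · rwa [mul_div_cancel₀ s ht.ne']
  · rintro ⟨u, hu, rfl⟩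
    exact (hmem u).1 hu

end raySet

theorem stmt7_general {n : ℕ} (φ : Euc n → ℝ) (hφ : StrictlyConvexNorm φ) (K : Set (Euc n))
    (x : Euc n) (hx : x ∉ K) (a : Euc n) (hax : a ∈ nearφ φ K x)
    (t : ℝ) (ht : 0 < t)
    (htle : ENNReal.ofReal t ≤ rhoφ φ K x) :
    rhoφ φ K x = ENNReal.ofReal t * rhoφ φ K (a + t • (x - a)) := by
  have hd := distφ_pos_of_mem_nearφ hφ.1 hx hax
  have htS := mem_raySet_of_ofReal_le_rhoφ hφ hd hax ht htle
  have haxt := mem_nearφ_ray hφ.1 hax htS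
  have hdt : 0 < distφ φ K (a + t • (x - a)) := by rw [htS.2]; positivity
  rw [rhoφ_eq_iSup_raySet hφ hd hax, rhoφ_eq_iSup_raySet hφ hdt haxt,
    raySet_eq_image_mul ht htS, iSup_image, ENNReal.mul_iSup]
  simp only [ENNReal.mul_iSup, ← ENNReal.ofReal_mul ht.le]

theorem stmt7 {n : ℕ} (φ : Euc n → ℝ) (hφ : StrictlyConvexNorm φ) (K : Set (Euc n))
    (hK : IsClosed K) (x : Euc n) (hx : x ∉ K) (a : Euc n) (hax : a ∈ nearφ φ K x)
    (hfin : rhoφ φ K x ≠ ⊤) (t : ℝ) (ht : 0 < t)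
    (htle : ENNReal.ofReal t ≤ rhoφ φ K x) :
    rhoφ φ K x = ENNReal.ofReal t * rhoφ φ K (a + t • (x - a)) :=
  stmt7_general φ hφ K x hx a hax t ht htle
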